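/- Let α ∈ ℕ and n ≥ 1. Define T_n^α(x) = −((α+2)_{n-1}/n!)·x·L_{n-1}^{α+2}(x) and the operator L_{2α+4}^α y(x) = (−1)^{α+1} e^x x · D_x^{α+2}( e^{−x} D_x^{α+2}( x^{α+1} y(x) ) ). Then L_{2α+4}^α T_n^α(x) = −(n)_{α+2} T_n^α(x), i.e. T_n^α is an eigenfunction of L_{2α+4}^α with eigenvalue −(n)_{α+2}. -/

import Mathlib

/-!
Two classical Laguerre identities drive the computation: `D^a (x^a L_m^a) = (m+1)_a L_m^0` for
`a ∈ ℕ`, and `D (e^{-x} L_m^γ) = -e^{-x} L_m^{γ+1}`, which is `L_m^γ - (L_m^γ)' = L_m^{γ+1}`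
(Pascal's rule for the Pochhammer coefficients). With `n = m + 1` and `a = α + 2`, the function
`x^{α+1} T_n^α` is a multiple of `x^a L_m^a`; the inner `D^a` turns it into a multiple of `L_m^0`,
and the outer `D^a`, applied after the weight `e^{-x}`, raises the parameter back to `a` with the
sign `(-1)^a`, reproducing `T_n^α` up to the factor `-(n)_a`.
-/

open Real Finset

noncomputable def laguerre (n : ℕ) (γ : ℝ) : ℝ → ℝ := fun x =>
  ∑ k ∈ Finset.range (n + 1),
    (-1 : ℝ) ^ k * (ascPochhammer ℝ (n - k)).eval (γ + (k : ℝ) + 1)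
      / ((n - k).factorial * k.factorial) * x ^ k

noncomputable def lagTypeOp (α : ℕ) (y : ℝ → ℝ) : ℝ → ℝ := fun x =>
  (-1 : ℝ) ^ (α + 1) * Real.exp x * x *
    iteratedDeriv (α + 2)
      (fun t => Real.exp (-t) * iteratedDeriv (α + 2) (fun s => s ^ (α + 1) * y s) t) x

noncomputable def Tpoly (n : ℕ) (α : ℕ) : ℝ → ℝ := fun x =>
  -((ascPochhammer ℝ (n - 1)).eval ((α : ℝ) + 2) / n.factorial) * x * laguerre (n - 1) ((α : ℝ) + 2) x

open Polynomial Nat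

noncomputable def laguerreCoeff (m : ℕ) (γ : ℝ) (k : ℕ) : ℝ :=
  (-1) ^ k * (ascPochhammer ℝ (m - k)).eval (γ + k + 1) / ((m - k)! * k !)

noncomputable def laguerrePoly (m : ℕ) (γ : ℝ) : ℝ[X] :=
  ∑ k ∈ Finset.range (m + 1), C (laguerreCoeff m γ k) * X ^ k

theorem eval_laguerrePoly (m : ℕ) (γ x : ℝ) :
    (laguerrePoly m γ).eval x = laguerre m γ x := by
  simp [laguerrePoly, laguerreCoeff, laguerre, eval_finsetSum]

theorem coeff_laguerrePoly (m : ℕ) (γ : ℝ) (k : ℕ) :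
    (laguerrePoly m γ).coeff k = if k ≤ m then laguerreCoeff m γ k else 0 := by
  simp [laguerrePoly, finsetSum_coeff]

theorem laguerreCoeff_sub_succ_mul {m k : ℕ} (hk : k < m) (γ : ℝ) :
    laguerreCoeff m γ k - laguerreCoeff m γ (k + 1) * (k + 1) = laguerreCoeff m (γ + 1) k := by
  obtain ⟨s, hs⟩ : ∃ s, m - k = s + 1 := ⟨m - k - 1, by omega⟩
  have hs' : m - (k + 1) = s := by omega
  set b : ℝ := γ + k + 1
  have pascal : (ascPochhammer ℝ (s + 1)).eval (b + 1)
      = (ascPochhammer ℝ (s + 1)).eval b + (s + 1) * (ascPochhammer ℝ s).eval (b + 1) := by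
    simpa [eval_comp, add_comm] using congrArg (eval b) (ascPochhammer_succ_comp_X_add_one ℝ s)
  simp only [laguerreCoeff, hs, hs', factorial_succ, pow_succ, cast_mul, cast_add, cast_one]
  rw [show γ + 1 + k + 1 = b + 1 by ring, show γ + (k + 1 : ℝ) + 1 = b + 1 by ring, pascal]
  field_simp
  ring

theorem laguerrePoly_sub_derivative (m : ℕ) (γ : ℝ) :
    laguerrePoly m γ - derivative (laguerrePoly m γ) = laguerrePoly m (γ + 1) := by
  ext k
  simp only [coeff_sub, coeff_derivative, coeff_laguerrePoly]
  rcases lt_trichotomy k m with hk | rfl | hk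
  · simp [hk.le, Nat.succ_le_of_lt hk, laguerreCoeff_sub_succ_mul hk]
  · simp [laguerreCoeff]
  · simp [Nat.not_le.2 hk, Nat.not_le.2 (hk.trans (Nat.lt_succ_self k))]

theorem laguerreCoeff_mul_descFactorial {m k : ℕ} (hk : k ≤ m) (a : ℕ) :
    laguerreCoeff m a k * (k + a).descFactorial a
      = (m + 1).ascFactorial a * laguerreCoeff m 0 k := by
  have h₁ : ((a + k)! : ℝ) * (ascPochhammer ℝ (m - k)).eval ((a : ℝ) + k + 1)
      = (m + a)! := by
    simpa [show a + k + (m - k) = m + a by omega]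
      using factorial_mul_ascPochhammer ℝ (a + k) (m - k)
  have h₂ : (k ! : ℝ) * (ascPochhammer ℝ (m - k)).eval (0 + (k : ℝ) + 1) = m ! := by
    simpa [Nat.add_sub_cancel' hk] using factorial_mul_ascPochhammer ℝ k (m - k)
  have h₃ : (k ! : ℝ) * (k + a).descFactorial a = (a + k)! := by
    rw_mod_cast [add_comm a k, ← Nat.factorial_mul_descFactorial (Nat.le_add_left a k),
      Nat.add_sub_cancel]
  have h₄ : (m ! : ℝ) * (m + 1).ascFactorial a = (m + a)! := by
    exact_mod_cast Nat.factorial_mul_ascFactorial m a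
  simp only [laguerreCoeff]
  have hk! : (k ! : ℝ) ≠ 0 := by positivity
  have hmk! : ((m - k)! : ℝ) ≠ 0 := by positivity
  field_simp
  apply mul_left_cancel₀ hk!
  linear_combination (ascPochhammer ℝ (m - k)).eval ((a : ℝ) + k + 1) * h₃ + h₁
    - ((m + 1).ascFactorial a : ℝ) * h₂ - h₄

theorem iterate_derivative_X_pow_mul_laguerrePoly (a m : ℕ) :
    derivative^[a] (X ^ a * laguerrePoly m a)
      = C ((m + 1).ascFactorial a : ℝ) * laguerrePoly m 0 := by
  ext k
  rw [coeff_iterate_derivative, coeff_X_pow_mul', coeff_C_mul, coeff_laguerrePoly,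
    coeff_laguerrePoly, if_pos (Nat.le_add_left a k), Nat.add_sub_cancel, nsmul_eq_mul]
  split_ifs with hk
  · rw [mul_comm, laguerreCoeff_mul_descFactorial hk]
  · simp

theorem derivative_sub_one_laguerrePoly (m : ℕ) (γ : ℝ) :
    (derivative - 1 : Module.End ℝ ℝ[X]) (laguerrePoly m γ) = -laguerrePoly m (γ + 1) := by
  rw [← laguerrePoly_sub_derivative]
  simp

theorem pow_derivative_sub_one_laguerrePoly (j m : ℕ) (γ : ℝ) :
    ((derivative - 1 : Module.End ℝ ℝ[X]) ^ j) (laguerrePoly m γ)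
      = (-1 : ℝ) ^ j • laguerrePoly m (γ + j) := by
  induction j generalizing γ with
  | zero => simp
  | succ j ih =>
    rw [pow_succ, Module.End.mul_apply, derivative_sub_one_laguerrePoly, map_neg, ih, pow_succ,
      mul_neg_one, neg_smul, cast_succ, add_assoc, add_comm 1 (j : ℝ)]

theorem iteratedDeriv_polynomial_eval {𝕜 : Type*} [NontriviallyNormedField 𝕜] (j : ℕ)
    (p : 𝕜[X]) :
    iteratedDeriv j (fun x => p.eval x) = fun x => (derivative^[j] p).eval x := by
  induction j generalizing p with
  | zero => simp
  | succ j ih =>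
    rw [iteratedDeriv_succ', Function.iterate_succ_apply, ← ih]
    exact congrArg _ (funext fun x => Polynomial.deriv p)

theorem deriv_exp_neg_mul_polynomial_eval (p : ℝ[X]) :
    deriv (fun x => exp (-x) * p.eval x)
      = fun x => exp (-x) * ((derivative - 1 : Module.End ℝ ℝ[X]) p).eval x := by
  funext x
  have hexp : HasDerivAt (fun x => exp (-x)) (-exp (-x)) x := by
    simpa using (hasDerivAt_neg x).exp
  rw [(hexp.fun_mul (p.hasDerivAt x)).deriv, LinearMap.sub_apply, Module.End.one_apply, eval_sub]
  ring

theorem iteratedDeriv_exp_neg_mul_polynomial_eval (j : ℕ) (p : ℝ[X]) :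
    iteratedDeriv j (fun x => exp (-x) * p.eval x)
      = fun x => exp (-x) * (((derivative - 1 : Module.End ℝ ℝ[X]) ^ j) p).eval x := by
  induction j generalizing p with
  | zero => simp
  | succ j ih => rw [iteratedDeriv_succ', deriv_exp_neg_mul_polynomial_eval, ih, pow_succ]; rfl

theorem lagTypeOp_mul_X_mul_laguerrePoly (α m : ℕ) (c : ℝ) :
    lagTypeOp α (fun x => c * x * (laguerrePoly m (α + 2 : ℕ)).eval x)
      = fun x => -((m + 1).ascFactorial (α + 2) : ℝ)
          * (c * x * (laguerrePoly m (α + 2 : ℕ)).eval x) := by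
  set L := laguerrePoly m (α + 2 : ℕ)
  set A : ℝ := ((m + 1).ascFactorial (α + 2) : ℝ)
  have h_weight : (fun s => s ^ (α + 1) * (c * s * L.eval s))
      = fun s => (C c * (X ^ (α + 2) * L)).eval s := by
    funext s
    simp only [eval_mul, eval_C, eval_pow, eval_X]
    ring
  have h_inner : iteratedDeriv (α + 2) (fun s => s ^ (α + 1) * (c * s * L.eval s))
      = fun s => ((c * A) • laguerrePoly m 0).eval s := by
    rw [h_weight, iteratedDeriv_polynomial_eval, iterate_derivative_C_mul,
      iterate_derivative_X_pow_mul_laguerrePoly, ← mul_assoc, ← C_mul, smul_eq_C_mul]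
  have h_outer : iteratedDeriv (α + 2) (fun t => exp (-t) * ((c * A) • laguerrePoly m 0).eval t)
      = fun t => exp (-t) * ((-1) ^ (α + 2) * (c * A) * L.eval t) := by
    rw [iteratedDeriv_exp_neg_mul_polynomial_eval, map_smul, pow_derivative_sub_one_laguerrePoly,
      zero_add]
    funext t
    rw [eval_smul, eval_smul, smul_eq_mul, smul_eq_mul]
    ring
  have h_sign : (-1 : ℝ) ^ (α + 1) * (-1) ^ (α + 2) = -1 := by
    rw [← pow_add]
    exact Odd.neg_one_pow ⟨α + 1, by omega⟩
  have h_exp (x : ℝ) : exp x * exp (-x) = 1 := by rw [← exp_add, add_neg_cancel, exp_zero]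
  funext x
  rw [lagTypeOp, h_inner, h_outer]
  linear_combination (exp x * exp (-x) * c * A * x * L.eval x) * h_sign
    - (c * A * x * L.eval x) * h_exp x

theorem laguerre_type_eigen (α : ℕ) (n : ℕ) (hn : 1 ≤ n) (x : ℝ) :
    lagTypeOp α (Tpoly n α) x
      = -((ascPochhammer ℝ (α + 2)).eval (n : ℝ)) * Tpoly n α x := by
  obtain ⟨m, rfl⟩ : ∃ m, n = m + 1 := ⟨n - 1, by omega⟩
  have h_T : Tpoly (m + 1) α = fun x =>
      -((ascPochhammer ℝ m).eval ((α : ℝ) + 2) / (m + 1)!) * x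
        * (laguerrePoly m (α + 2 : ℕ)).eval x := by
    funext x
    rw [Tpoly, Nat.add_sub_cancel, eval_laguerrePoly, cast_add, cast_two]
  rw [h_T, lagTypeOp_mul_X_mul_laguerrePoly, ascPochhammer_nat_eq_natCast_ascFactorial]
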